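/- Let Λ be a left cancellative small category and let d : Λ → Γ be a length function satisfying the weak factorization property. Then Λ is right cancellative (i.e. βα = γα implies β = γ whenever the compositions are defined) if and only if Λ is action-free (i.e. whenever gγ = γ for some γ ∈ Λ and invertible g ∈ Λ⁻¹, then g = r(γ)). -/

import Mathlib

/-- A left cancellative small category (LCSC), presented as a set of morphisms
with source and range maps and a (total, but only meaningful on composable
pairs) composition. Identities are the morphisms of the form `src a` / `ran a`. -/
structure LCSC where
  Mor : Type
  src : Mor → Mor
  ran : Mor → Mor
  comp : Mor → Mor → Mor
  src_src : ∀ a, src (src a) = src a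
  ran_src : ∀ a, ran (src a) = src a
  src_ran : ∀ a, src (ran a) = ran a
  ran_ran : ∀ a, ran (ran a) = ran a
  comp_src : ∀ a, comp a (src a) = a
  id_comp : ∀ a, comp (ran a) a = a
  src_comp : ∀ a b, src a = ran b → src (comp a b) = src b
  ran_comp : ∀ a b, src a = ran b → ran (comp a b) = ran a
  assoc : ∀ a b c, src a = ran b → src b = ran c →
      comp (comp a b) c = comp a (comp b c)
  leftCancel : ∀ a b c, src a = ran b → src a = ran c →
      comp a b = comp a c → b = c

namespace LCSC

variable (C : LCSC)

/-- `v` is an identity morphism (an object of `Λ⁰`). -/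
def IsId (v : C.Mor) : Prop := C.src v = v ∧ C.ran v = v

/-- `a ∈ Λ⁻¹`, i.e. `a` is invertible. -/
def IsInvertible (a : C.Mor) : Prop :=
  ∃ b, C.src a = C.ran b ∧ C.src b = C.ran a ∧
    C.comp a b = C.ran a ∧ C.comp b a = C.src a

/-- The principal right ideal `aΛ`. -/
def Ideal (a : C.Mor) : Set C.Mor :=
  {x | ∃ c, C.src a = C.ran c ∧ x = C.comp a c}

/-- `a ≤ b` iff `b ∈ aΛ`, i.e. `a` is an initial segment of `b`. -/
def le (a b : C.Mor) : Prop := b ∈ C.Ideal a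

end LCSC
/-- `d : Λ → Γ ⊆ Q` is a length function: it takes values in the submonoid `Γ`
and is multiplicative on composable pairs. -/
def LCSC.LenFn (C : LCSC) {Q : Type} [Group Q] (Γ : Submonoid Q)
    (d : C.Mor → Q) : Prop :=
  (∀ a, d a ∈ Γ) ∧ ∀ a b, C.src a = C.ran b → d (C.comp a b) = d a * d b

/-- The weak factorization property (WFP) for a length function `d : Λ → Γ`. -/
def LCSC.WFP (C : LCSC) {Q : Type} [Group Q] (Γ : Submonoid Q)
    (d : C.Mor → Q) : Prop :=
  ∀ a γ₁ γ₂, γ₁ ∈ Γ → γ₂ ∈ Γ → d a = γ₁ * γ₂ →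
    ∃ a₁ a₂, C.src a₁ = C.ran a₂ ∧ a = C.comp a₁ a₂ ∧ d a₁ = γ₁ ∧ d a₂ = γ₂ ∧
      ∀ b₁ b₂, C.src b₁ = C.ran b₂ → a = C.comp b₁ b₂ → d b₁ = γ₁ → d b₂ = γ₂ →
        ∃ g₁ g₂, C.IsInvertible g₁ ∧ C.IsInvertible g₂ ∧
          C.src a₁ = C.ran g₁ ∧ b₁ = C.comp a₁ g₁ ∧
          C.src g₂ = C.ran a₂ ∧ b₂ = C.comp g₂ a₂
/-- `Λ` is right cancellative: `βα = γα` implies `β = γ`. -/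
def LCSC.RightCancellative (C : LCSC) : Prop :=
  ∀ a b c, C.src b = C.ran a → C.src c = C.ran a →
    C.comp b a = C.comp c a → b = c

/-- `Λ` is action-free: whenever `gγ = γ` with `g ∈ Λ⁻¹`, then `g = r(γ)`. -/
def LCSC.ActionFree (C : LCSC) : Prop :=
  ∀ g a, C.IsInvertible g → C.src g = C.ran a → C.comp g a = a → g = C.ran a

/-!
If `ba = ca`, the weak factorization property applied to this morphism, split at length
`d b = d c`, gives `b = a₁g` and `c = a₁g'` with `g, g'` invertible. Left cancellation turns
`a₁ga = a₁g'a` into `ga = g'a`, i.e. `g'⁻¹g` fixes `a`, so `g = g'` when the category is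
action-free.
-/

namespace LCSC

variable {C : LCSC}

lemma IsInvertible.comp {g h : C.Mor} (hg : C.IsInvertible g) (hh : C.IsInvertible h)
    (hgh : C.src g = C.ran h) : C.IsInvertible (C.comp g h) := by
  obtain ⟨g', hg₁, hg₂, hg₃, hg₄⟩ := hg
  obtain ⟨h', hh₁, hh₂, hh₃, hh₄⟩ := hh
  have hh'g' : C.src h' = C.ran g' := by rw [hh₂, ← hgh, hg₁]
  refine ⟨C.comp h' g', ?_, ?_, ?_, ?_⟩
  · rw [C.src_comp g h hgh, C.ran_comp h' g' hh'g', hh₁]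
  · rw [C.src_comp h' g' hh'g', C.ran_comp g h hgh, hg₂]
  · calc C.comp (C.comp g h) (C.comp h' g')
        = C.comp g (C.comp (C.comp h h') g') := by
          rw [C.assoc g h _ hgh (by rw [C.ran_comp h' g' hh'g', ← hh₁]),
            C.assoc h h' g' hh₁ hh'g']
      _ = C.ran (C.comp g h) := by
          rw [hh₃, ← hgh, hg₁, C.id_comp, hg₃, C.ran_comp g h hgh]
  · calc C.comp (C.comp h' g') (C.comp g h)
        = C.comp h' (C.comp (C.comp g' g) h) := by
          rw [C.assoc h' g' _ hh'g' (by rw [hg₂, C.ran_comp g h hgh]),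
            C.assoc g' g h hg₂ hgh]
      _ = C.src (C.comp g h) := by
          rw [hg₄, hgh, C.id_comp, hh₄, C.src_comp g h hgh]

lemma ActionFree.eq_of_comp_eq {g h a : C.Mor} (hC : C.ActionFree) (hg : C.IsInvertible g)
    (hh : C.IsInvertible h) (hga : C.src g = C.ran a) (hha : C.src h = C.ran a)
    (heq : C.comp g a = C.comp h a) : g = h := by
  obtain ⟨h', hh₁, hh₂, hh₃, hh₄⟩ := hh
  have hh'_inv : C.IsInvertible h' :=
    ⟨h, hh₂, hh₁, by rw [hh₄, hh₁], by rw [hh₃, hh₂]⟩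
  have hran : C.ran g = C.ran h := by
    rw [← C.ran_comp g a hga, heq, C.ran_comp h a hha]
  have hh'g : C.src h' = C.ran g := by rw [hh₂, hran]
  have hfix : C.comp (C.comp h' g) a = a := by
    rw [C.assoc h' g a hh'g hga, heq, ← C.assoc h' h a hh₂ hha, hh₄, hha, C.id_comp]
  have hunit : C.comp h' g = C.ran a :=
    hC _ a (hh'_inv.comp hg hh'g) (by rw [C.src_comp h' g hh'g, hga]) hfix
  calc g = C.comp (C.comp h h') g := by rw [hh₃, ← hran, C.id_comp]
    _ = h := by rw [C.assoc h h' g hh₁ hh'g, hunit, ← hha, C.comp_src]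

lemma WFP.exists_common_prefix {Q : Type} [Group Q] {Γ : Submonoid Q} {d : C.Mor → Q}
    (hwfp : C.WFP Γ d) (hd : C.LenFn Γ d) {a a' b c : C.Mor} (hb : C.src b = C.ran a)
    (hc : C.src c = C.ran a') (hbc : C.comp b a = C.comp c a') (ha : d a = d a') :
    ∃ a₁ g g', C.IsInvertible g ∧ C.IsInvertible g' ∧ C.src a₁ = C.ran g ∧
      C.src a₁ = C.ran g' ∧ b = C.comp a₁ g ∧ c = C.comp a₁ g' := by
  have hlen : d b = d c := mul_right_cancel <|
    calc d b * d a = d (C.comp c a') := by rw [← hbc, hd.2 b a hb]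
      _ = d c * d a := by rw [hd.2 c a' hc, ha]
  obtain ⟨a₁, _, -, -, -, -, huniq⟩ :=
    hwfp (C.comp b a) (d b) (d a) (hd.1 b) (hd.1 a) (hd.2 b a hb)
  obtain ⟨g, -, hg, -, ha₁g, hb, -⟩ := huniq b a hb rfl rfl rfl
  obtain ⟨g', -, hg', -, ha₁g', hc, -⟩ := huniq c a' hc hbc hlen.symm ha.symm
  exact ⟨a₁, g, g', hg, hg', ha₁g, ha₁g', hb, hc⟩

end LCSC

theorem lcsc_wfp_rightCancellative_iff_actionFree_general (C : LCSC) {Q : Type}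
    [Group Q] (Γ : Submonoid Q)
    (d : C.Mor → Q) (hd : C.LenFn Γ d) (hwfp : C.WFP Γ d) :
    C.RightCancellative ↔ C.ActionFree := by
  constructor
  · intro hRC g a _ hga hfix
    exact hRC a g (C.ran a) hga (C.src_ran a) (by rw [hfix, C.id_comp])
  · intro hAF a b c hb hc hbc
    obtain ⟨a₁, g, g', hg, hg', ha₁g, ha₁g', rfl, rfl⟩ :=
      hwfp.exists_common_prefix hd hb hc hbc rfl
    have hga : C.src g = C.ran a := by rwa [C.src_comp a₁ g ha₁g] at hb
    have hg'a : C.src g' = C.ran a := by rwa [C.src_comp a₁ g' ha₁g'] at hc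
    have hcancel : C.comp g a = C.comp g' a :=
      C.leftCancel a₁ _ _ (by rw [C.ran_comp g a hga, ha₁g])
        (by rw [C.ran_comp g' a hg'a, ha₁g'])
        (by rw [← C.assoc a₁ g a ha₁g hga, hbc, C.assoc a₁ g' a ha₁g' hg'a])
    rw [hAF.eq_of_comp_eq hg hg' hga hg'a hcancel]

/-- An LCSC with a length function satisfying the WFP is right
cancellative if and only if it is action-free. -/
theorem lcsc_wfp_rightCancellative_iff_actionFree (C : LCSC) {Q : Type}
    [Group Q] (Γ : Submonoid Q) (hΓ : ∀ q ∈ Γ, q⁻¹ ∈ Γ → q = 1)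
    (d : C.Mor → Q) (hd : C.LenFn Γ d) (hwfp : C.WFP Γ d) :
    C.RightCancellative ↔ C.ActionFree :=
  lcsc_wfp_rightCancellative_iff_actionFree_general C Γ d hd hwfp
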